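/- Let n ∈ ℝ³ be a unit vector, β ∈ ℝ³, and A := max(1, ‖β‖). With 𝒩 := [[0_{3,3}, −V_n],[V_n, (β·n) I₃]], ℳ_D := [[0_{3,3}, V_n],[V_n, |β·n| I₃]], interface penalty S^i := A [[V_nᵀV_n, 0_{3,3}],[0_{3,3}, V_nᵀV_n]] and boundary penalty S^b := A [[0_{3,3}, 0_{3,3}],[0_{3,3}, V_nᵀV_n]], the following hold: (i) S^i is symmetric positive semidefinite and (S^i z, z) = A(‖n×b‖² + ‖n×p‖²) ≤ A ‖z‖² for all z = (b, p) ∈ ℝ⁶; (ii) Ker(ℳ_D − 𝒩) ⊆ Ker(ℳ_D + S^b − 𝒩). -/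

import Mathlib

/-!
`Sⁱ = A • WᵀW` with `W = diag(V_n, V_n)`, which gives symmetry, positive semidefiniteness and
`(Sⁱ z, z) = A (‖V_n b‖² + ‖V_n p‖²)`; for a unit vector `n`, Lagrange's identity
`‖n × v‖² = ‖v‖² - (n · v)²` gives the bound. For (ii), the first block row of `ℳ_D - 𝒩` is
`[0, 2 V_n]`, so a kernel vector has `V_n p = 0`, and `S^b z = A (0, V_nᵀ V_n p)` vanishes.
-/

open Matrix

/-- The cross-product matrix `V_α`, characterized by `V_α s = α × s`. -/
def crossMat (α : Fin 3 → ℝ) : Matrix (Fin 3) (Fin 3) ℝ :=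
  !![0, -α 2, α 1; α 2, 0, -α 0; -α 1, α 0, 0]

section BlockMatrix

variable {m n R : Type*} [Fintype m] [CommSemiring R]

theorem transpose_mul_self_mulVec_dotProduct [Fintype n] (V : Matrix m n R) (v : n → R) :
    (Vᵀ * V) *ᵥ v ⬝ᵥ v = V *ᵥ v ⬝ᵥ V *ᵥ v := by
  rw [← mulVec_mulVec, mulVec_transpose, ← dotProduct_mulVec, dotProduct_comm]

theorem fromBlocks_diag_transpose_mul_self (V : Matrix m n R) :
    (fromBlocks V 0 0 V)ᵀ * fromBlocks V 0 0 V = fromBlocks (Vᵀ * V) 0 0 (Vᵀ * V) := by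
  simp [fromBlocks_transpose, fromBlocks_multiply]

theorem mulVec_inr_eq_zero_of_fromBlocks_zero_mulVec {l o : Type*} [Fintype l] [Fintype n]
    {V : Matrix l n R} {C : Matrix o l R} {D : Matrix o n R} {z : l ⊕ n → R}
    (hz : fromBlocks 0 V C D *ᵥ z = 0) : V *ᵥ (z ∘ Sum.inr) = 0 := by
  simpa [fromBlocks_mulVec] using congrArg (· ∘ Sum.inl) hz

end BlockMatrix

theorem crossMat_mulVec (α v : Fin 3 → ℝ) : crossMat α *ᵥ v = α ⨯₃ v := by
  ext i
  fin_cases i <;> simp [crossMat, cross_apply, mulVec, vecHead, vecTail] <;> ring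

theorem sum_sq_eq_dotProduct_self {n : Type*} [Fintype n] (v : n → ℝ) :
    ∑ i, v i ^ 2 = v ⬝ᵥ v := by
  simp [dotProduct, sq]

theorem cross_dotProduct_cross_self_le {u : Fin 3 → ℝ} (hu : u ⬝ᵥ u = 1) (v : Fin 3 → ℝ) :
    u ⨯₃ v ⬝ᵥ u ⨯₃ v ≤ v ⬝ᵥ v := by
  rw [cross_dot_cross, hu, one_mul, dotProduct_comm v u]
  nlinarith [mul_self_nonneg (u ⬝ᵥ v)]

theorem ker_sub_le_ker_add_penalty {n R : Type*} [Fintype n] [DecidableEq n] [Field R]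
    [LinearOrder R] [IsStrictOrderedRing R] (V : Matrix n n R) (c A : R) :
    LinearMap.ker (fromBlocks 0 V V (|c| • 1) - fromBlocks 0 (-V) V (c • 1)).mulVecLin ≤
      LinearMap.ker (fromBlocks 0 V V (|c| • 1) + A • fromBlocks 0 0 0 (Vᵀ * V) -
        fromBlocks 0 (-V) V (c • 1)).mulVecLin := by
  intro z hz
  rw [LinearMap.mem_ker, mulVecLin_apply] at hz ⊢
  have hdiff : fromBlocks 0 V V (|c| • 1) - fromBlocks 0 (-V) V (c • 1) =
      fromBlocks 0 (2 • V) 0 ((|c| - c) • (1 : Matrix n n R)) := by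
    simp [sub_eq_add_neg, fromBlocks_neg, fromBlocks_add, two_smul, add_smul]
  have hVp : V *ᵥ (z ∘ Sum.inr) = 0 := by
    have := mulVec_inr_eq_zero_of_fromBlocks_zero_mulVec (hdiff ▸ hz)
    rwa [smul_mulVec, smul_eq_zero, or_iff_right two_ne_zero] at this
  rw [add_sub_right_comm, add_mulVec, hz, zero_add, smul_mulVec, fromBlocks_mulVec,
    ← mulVec_mulVec, hVp]
  simp

/-- With `A = max(1, ‖β‖)`, the boundary matrices
`𝒩 = [[0, −V_n],[V_n, (β·n) I₃]]`, `ℳ_D = [[0, V_n],[V_n, |β·n| I₃]]`, interface penalty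
`Sⁱ = A [[V_nᵀV_n, 0],[0, V_nᵀV_n]]` and boundary penalty `S^b = A [[0, 0],[0, V_nᵀV_n]]` for
the vector diffusion–advection–reaction problem:
(i) `Sⁱ` is symmetric positive semidefinite and
`(Sⁱ z, z) = A(‖n×b‖² + ‖n×p‖²) ≤ A ‖z‖²` for all `z = (b, p) ∈ ℝ⁶`;
(ii) `Ker(ℳ_D − 𝒩) ⊆ Ker(ℳ_D + S^b − 𝒩)`. -/
theorem stmt18 (n β : Fin 3 → ℝ) (hn : ∑ i, n i ^ 2 = 1) :
    let A : ℝ := max 1 (Real.sqrt (∑ i, β i ^ 2))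
    let N : Matrix (Fin 3 ⊕ Fin 3) (Fin 3 ⊕ Fin 3) ℝ :=
      Matrix.fromBlocks 0 (-crossMat n) (crossMat n) ((β ⬝ᵥ n) • 1)
    let MD : Matrix (Fin 3 ⊕ Fin 3) (Fin 3 ⊕ Fin 3) ℝ :=
      Matrix.fromBlocks 0 (crossMat n) (crossMat n) (|β ⬝ᵥ n| • 1)
    let Si : Matrix (Fin 3 ⊕ Fin 3) (Fin 3 ⊕ Fin 3) ℝ :=
      A • Matrix.fromBlocks ((crossMat n)ᵀ * crossMat n) 0 0 ((crossMat n)ᵀ * crossMat n)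
    let Sb : Matrix (Fin 3 ⊕ Fin 3) (Fin 3 ⊕ Fin 3) ℝ :=
      A • Matrix.fromBlocks 0 0 0 ((crossMat n)ᵀ * crossMat n)
    (Si.IsSymm ∧ Si.PosSemidef ∧
      ∀ z : Fin 3 ⊕ Fin 3 → ℝ,
        Si.mulVec z ⬝ᵥ z =
          A * ((∑ i, (crossProduct n (fun j => z (Sum.inl j)) i) ^ 2) +
            ∑ i, (crossProduct n (fun j => z (Sum.inr j)) i) ^ 2) ∧
        Si.mulVec z ⬝ᵥ z ≤ A * ∑ i, z i ^ 2) ∧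
    LinearMap.ker (MD - N).mulVecLin ≤ LinearMap.ker (MD + Sb - N).mulVecLin := by
  intro A N MD Si Sb
  have hA : 0 ≤ A := zero_le_one.trans (le_max_left _ _)
  have hunit : n ⬝ᵥ n = 1 := by rwa [← sum_sq_eq_dotProduct_self]
  set W : Matrix (Fin 3 ⊕ Fin 3) (Fin 3 ⊕ Fin 3) ℝ := fromBlocks (crossMat n) 0 0 (crossMat n)
  have hSi : Si = A • (Wᵀ * W) := by rw [fromBlocks_diag_transpose_mul_self]
  have hquad (z : Fin 3 ⊕ Fin 3 → ℝ) : Si *ᵥ z ⬝ᵥ z =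
      A * (n ⨯₃ (z ∘ Sum.inl) ⬝ᵥ n ⨯₃ (z ∘ Sum.inl) +
        n ⨯₃ (z ∘ Sum.inr) ⬝ᵥ n ⨯₃ (z ∘ Sum.inr)) := by
    rw [hSi, smul_mulVec, smul_dotProduct, transpose_mul_self_mulVec_dotProduct, fromBlocks_mulVec,
      sumElim_dotProduct_sumElim]
    simp [crossMat_mulVec]
  refine ⟨⟨hSi ▸ (isSymm_transpose_mul_self W).smul A, ?_, fun z => ⟨?_, ?_⟩⟩,
    ker_sub_le_ker_add_penalty (crossMat n) (β ⬝ᵥ n) A⟩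
  · rw [hSi, ← conjTranspose_eq_transpose_of_trivial]
    exact (posSemidef_conjTranspose_mul_self W).smul hA
  · simp only [hquad, sum_sq_eq_dotProduct_self]
    rfl
  · rw [hquad, sum_sq_eq_dotProduct_self, ← Sum.elim_comp_inl_inr z, sumElim_dotProduct_sumElim]
    gcongr <;> exact cross_dotProduct_cross_self_le hunit _
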